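/- Let X be a compact convex set, x an extreme point of X such that {x} is a split face, and h_x the upper envelope of the characteristic function χ_{x}, i.e., h_x(z) = inf{h(z) : h ∈ A^c(X), h > χ_{x}}. Then h_x is upper semicontinuous, affine, h_x(x) = 1, and h_x = 0 on the complementary face {x}'. -/

import Mathlib

/-!
Call `s ∈ [0, 1]` a weight of `z` if `z = s • x + (1 - s) • w` for some `w ∈ X`. A continuous
affine `h > χ_{x}` on `X` satisfies `h z ≥ s` for every weight `s` of `z`; conversely, separating
`(z, t)` by Hahn–Banach from the compact convex set of pairs `(z, s)` with `s` a weight of `z`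
yields such an `h` with `h z < t` whenever `t` exceeds all weights. So `h_x z` is the largest
weight of `z` when there is one.

When `{x}` is a split face, uniqueness of the split decomposition shows that the largest weight of
`c • x + (1 - c) • w` with `w ∈ {x}'` is `c`. Hence on `X` the graph of `h_x` is the convex hull
of `(x, 1)` and `{x}' × {0}`, so `h_x` is affine, `h_x x = 1` and `h_x = 0` on `{x}'`. Upper
semicontinuity holds for any infimum of continuous functions.
-/

open Classical Set

section ConvexJoin

variable {F : Type*} [AddCommGroup F] [Module ℝ F]

theorem convexJoin_eq_image (s t : Set F) :
    convexJoin ℝ s t =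
      (fun p : F × F × ℝ => (1 - p.2.2) • p.1 + p.2.2 • p.2.1) '' (s ×ˢ t ×ˢ Icc 0 1) := by
  ext z
  simp only [mem_convexJoin, segment_eq_image, mem_image, mem_prod]
  constructor
  · rintro ⟨a, ha, b, hb, θ, hθ, rfl⟩
    exact ⟨(a, b, θ), ⟨ha, hb, hθ⟩, rfl⟩
  · rintro ⟨⟨a, b, θ⟩, ⟨ha, hb, hθ⟩, rfl⟩
    exact ⟨a, ha, b, hb, θ, hθ, rfl⟩

theorem IsCompact.convexJoin [TopologicalSpace F] [ContinuousAdd F] [ContinuousSMul ℝ F]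
    {s t : Set F} (hs : IsCompact s) (ht : IsCompact t) : IsCompact (convexJoin ℝ s t) := by
  rw [convexJoin_eq_image]
  exact (hs.prod (ht.prod isCompact_Icc)).image (by fun_prop)

end ConvexJoin

section Envelope

variable {E : Type*} [AddCommGroup E] [Module ℝ E]

def decompWeights (S : Set E) (x z : E) : Set ℝ :=
  {s | s ∈ Icc 0 1 ∧ ∃ w ∈ S, z = s • x + (1 - s) • w}

theorem mem_convexJoin_prod_zero {S : Set E} {x z : E} {s : ℝ} :
    (z, s) ∈ convexJoin ℝ {((x, 1) : E × ℝ)} (S ×ˢ {0}) ↔ s ∈ decompWeights S x z := by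
  rw [convexJoin_comm]
  simp only [convexJoin_singleton_right, mem_iUnion, segment_eq_image, mem_image, mem_prod,
    mem_singleton_iff, Prod.exists, decompWeights, mem_ofPred_eq]
  constructor
  · rintro ⟨w, _, ⟨hw, rfl⟩, θ, hθ, h⟩
    simp only [Prod.smul_mk, Prod.mk_add_mk, smul_eq_mul, mul_one, Prod.mk.injEq] at h
    obtain ⟨rfl, rfl⟩ := h
    exact ⟨by simpa using hθ, w, hw, by module⟩
  · rintro ⟨hs, w, hw, rfl⟩
    refine ⟨w, 0, ⟨hw, rfl⟩, s, hs, ?_⟩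
    simp only [Prod.smul_mk, Prod.mk_add_mk, smul_eq_mul, mul_one]
    exact Prod.ext (by module) (by ring)

variable [TopologicalSpace E] {X : Set E} {x z : E} {h : E →ᵃ[ℝ] ℝ}

def IsStrictAffineMajorant (X : Set E) (x : E) (h : E →ᵃ[ℝ] ℝ) : Prop :=
  ContinuousOn h X ∧ ∀ w ∈ X, (if w = x then (1 : ℝ) else 0) < h w

noncomputable def upperEnvelope (X : Set E) (x z : E) : ℝ :=
  sInf {r | ∃ h, IsStrictAffineMajorant X x h ∧ r = h z}

theorem isStrictAffineMajorant_const_two : IsStrictAffineMajorant X x (AffineMap.const ℝ E 2) :=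
  ⟨continuousOn_const, fun w _ => by split_ifs <;> norm_num⟩

namespace IsStrictAffineMajorant

theorem nonneg (hh : IsStrictAffineMajorant X x h) {w : E} (hw : w ∈ X) : 0 ≤ h w := by
  have := hh.2 w hw
  split_ifs at this <;> linarith

theorem one_lt (hh : IsStrictAffineMajorant X x h) (hxX : x ∈ X) : 1 < h x := by
  simpa using hh.2 x hxX

theorem le_of_mem_decompWeights (hh : IsStrictAffineMajorant X x h) (hxX : x ∈ X) {s : ℝ}
    (hs : s ∈ decompWeights X x z) : s ≤ h z := by
  obtain ⟨⟨hs0, hs1⟩, w, hw, rfl⟩ := hs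
  have hcombo : h (s • x + (1 - s) • w) = s * h x + (1 - s) * h w :=
    Convex.combo_affine_apply (by ring)
  nlinarith [hh.one_lt hxX, hh.nonneg hw]

end IsStrictAffineMajorant

theorem upperEnvelope_le (hh : IsStrictAffineMajorant X x h) {w : E} (hw : w ∈ X) :
    upperEnvelope X x w ≤ h w :=
  csInf_le ⟨0, by rintro _ ⟨g, hg, rfl⟩; exact hg.nonneg hw⟩ ⟨h, hh, rfl⟩

theorem exists_lt_of_upperEnvelope_lt {y : ℝ} (hy : upperEnvelope X x z < y) :
    ∃ h, IsStrictAffineMajorant X x h ∧ h z < y := by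
  rw [upperEnvelope] at hy
  obtain ⟨_, ⟨h, hh, rfl⟩, hlt⟩ :=
    exists_lt_of_csInf_lt (by exact ⟨_, _, isStrictAffineMajorant_const_two, rfl⟩) hy
  exact ⟨h, hh, hlt⟩

theorem upperSemicontinuousOn_upperEnvelope : UpperSemicontinuousOn (upperEnvelope X x) X := by
  intro z hz y hy
  obtain ⟨h, hh, hlt⟩ := exists_lt_of_upperEnvelope_lt hy
  filter_upwards [(hh.1 z hz).eventually_lt_const hlt, self_mem_nhdsWithin] with w hw hwX
  exact (upperEnvelope_le hh hwX).trans_lt hw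

end Envelope

section Separation

variable {E : Type*} [AddCommGroup E] [Module ℝ E] [TopologicalSpace E]
  [IsTopologicalAddGroup E] [ContinuousSMul ℝ E] [LocallyConvexSpace ℝ E]
  {X : Set E} {x z : E}

theorem exists_isStrictAffineMajorant_lt
    (hK : IsClosed (convexJoin ℝ {((x, 1) : E × ℝ)} (X ×ˢ {0}))) (hXconv : Convex ℝ X)
    {m t : ℝ} (hm : m ∈ decompWeights X x z) (hmt : m < t)
    (ht : t ∉ decompWeights X x z) : ∃ h, IsStrictAffineMajorant X x h ∧ h z < t := by
  have hKconv : Convex ℝ (convexJoin ℝ {((x, 1) : E × ℝ)} (X ×ˢ {0})) :=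
    (convex_singleton _).convexJoin (hXconv.prod (convex_singleton 0))
  obtain ⟨f, u, hfu, hfK⟩ :=
    geometric_hahn_banach_point_closed hKconv hK (mt mem_convexJoin_prod_zero.1 ht)
  have hf : ∀ w s, f (w, s) = f (w, 0) + s * f (0, 1) := fun w s => by
    rw [← smul_eq_mul, ← map_smul, ← map_add, Prod.smul_mk, smul_zero, smul_eq_mul, mul_one,
      Prod.mk_add_mk, add_zero, zero_add]
  set c := f (0, 1)
  have hc : c < 0 := by
    have := hfK _ (mem_convexJoin_prod_zero.2 hm)
    rw [hf] at this hfu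
    nlinarith
  let h : E →ᵃ[ℝ] ℝ := c⁻¹ •
    (AffineMap.const ℝ E u - ((f.comp (ContinuousLinearMap.inl ℝ E ℝ) : E →L[ℝ] ℝ) :
      E →ₗ[ℝ] ℝ).toAffineMap)
  have hval : ∀ w, h w = (u - f (w, 0)) / c := fun w => by
    simp [h, div_eq_inv_mul]
  refine ⟨h, ⟨?_, fun w hw => ?_⟩, ?_⟩
  · exact (Continuous.congr (by fun_prop) fun w => (hval w).symm).continuousOn
  · have hχ : (if w = x then (1 : ℝ) else 0) ∈ decompWeights X x w := by
      split_ifs with hwx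
      · exact ⟨⟨zero_le_one, le_rfl⟩, w, hw, by rw [hwx]; module⟩
      · exact ⟨⟨le_rfl, zero_le_one⟩, w, hw, by module⟩
    have := hfK _ (mem_convexJoin_prod_zero.2 hχ)
    rw [hf] at this
    rw [hval, lt_div_iff_of_neg hc]
    linarith
  · rw [hf] at hfu
    rw [hval, div_lt_iff_of_neg hc]
    linarith

theorem upperEnvelope_eq_of_isGreatest [T2Space E] (hXc : IsCompact X) (hXconv : Convex ℝ X)
    (hxX : x ∈ X) {m : ℝ} (hm : IsGreatest (decompWeights X x z) m) :
    upperEnvelope X x z = m := by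
  have hK : IsClosed (convexJoin ℝ {((x, 1) : E × ℝ)} (X ×ˢ {0})) :=
    (isCompact_singleton.convexJoin (hXc.prod isCompact_singleton)).isClosed
  have hle : ∀ r ∈ {r | ∃ h, IsStrictAffineMajorant X x h ∧ r = h z}, m ≤ r := by
    rintro _ ⟨h, hh, rfl⟩
    exact hh.le_of_mem_decompWeights hxX hm.1
  apply le_antisymm
  · refine le_of_forall_gt_imp_ge_of_dense fun t hmt => ?_
    obtain ⟨h, hh, hlt⟩ := exists_isStrictAffineMajorant_lt hK hXconv hm.1 hmt
      fun ht => (hm.2 ht).not_gt hmt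
    exact (csInf_le ⟨m, hle⟩ ⟨h, hh, rfl⟩).trans hlt.le
  · exact le_csInf ⟨_, _, isStrictAffineMajorant_const_two, rfl⟩ hle

end Separation

section SplitFace

variable {E : Type*} [AddCommGroup E] [Module ℝ E] {X : Set E} {x z w : E}

/-- The complementary set `{x}'`. -/
def complFace (X : Set E) (x : E) : Set E :=
  ⋃₀ {F | IsExtreme ℝ X F ∧ x ∉ F}

def IsSplitSingleton (X : Set E) (x : E) : Prop :=
  Convex ℝ (complFace X x) ∧ ∀ z ∈ X \ ({x} ∪ complFace X x),
    ∃! p : ℝ × E, p.1 ∈ Ioo (0 : ℝ) 1 ∧ p.2 ∈ complFace X x ∧ z = p.1 • x + (1 - p.1) • p.2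

theorem complFace_subset : complFace X x ⊆ X := by
  rintro z ⟨F, ⟨hF, -⟩, hzF⟩
  exact hF.subset hzF

theorem notMem_complFace : x ∉ complFace X x := by
  rintro ⟨F, ⟨-, hxF⟩, hxF'⟩
  exact hxF hxF'

theorem eq_zero_of_mem_decompWeights_of_mem_complFace (hxX : x ∈ X) (hz : z ∈ complFace X x)
    {s : ℝ} (hs : s ∈ decompWeights X x z) : s = 0 := by
  obtain ⟨F, ⟨hF, hxF⟩, hzF⟩ := hz
  obtain ⟨⟨hs0, hs1⟩, w, hw, rfl⟩ := hs
  by_contra hs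
  apply hxF
  rcases hs1.eq_or_lt with rfl | hs1
  · simpa using hzF
  · exact hF.left_mem_of_mem_openSegment hxX hw hzF
      ⟨s, 1 - s, hs0.lt_of_ne' hs, by linarith, by ring, rfl⟩

theorem smul_add_smul_ne_of_mem_complFace (hw : w ∈ complFace X x) {c : ℝ} (hc : c < 1) :
    c • x + (1 - c) • w ≠ x := by
  intro h
  have : (1 - c) • (w - x) = 0 := by
    rw [← sub_eq_zero.2 h]
    module
  rcases smul_eq_zero.1 this with hc' | hwx
  · linarith
  · exact notMem_complFace (sub_eq_zero.1 hwx ▸ hw)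

theorem isGreatest_decompWeights_self (hxX : x ∈ X) : IsGreatest (decompWeights X x x) 1 :=
  ⟨⟨⟨zero_le_one, le_rfl⟩, x, hxX, by module⟩, fun _ hs => hs.1.2⟩

namespace IsSplitSingleton

theorem exists_decomp (hsplit : IsSplitSingleton X x) (hz : z ∈ X) (hzx : z ≠ x) :
    ∃ μ ∈ Ico (0 : ℝ) 1, ∃ w ∈ complFace X x, z = μ • x + (1 - μ) • w := by
  by_cases hzc : z ∈ complFace X x
  · exact ⟨0, ⟨le_rfl, zero_lt_one⟩, z, hzc, by module⟩
  · obtain ⟨⟨μ, w⟩, ⟨hμ0, hμ1⟩, hw, rfl⟩ := (hsplit.2 z ⟨hz, by simp [hzx, hzc]⟩).exists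
    exact ⟨μ, ⟨hμ0.le, hμ1⟩, w, hw, rfl⟩

theorem isGreatest_decompWeights (hsplit : IsSplitSingleton X x) (hXconv : Convex ℝ X)
    (hxX : x ∈ X) {c : ℝ} (hc : c ∈ Icc (0 : ℝ) 1) (hw : w ∈ complFace X x) :
    IsGreatest (decompWeights X x (c • x + (1 - c) • w)) c := by
  refine ⟨⟨hc, w, complFace_subset hw, rfl⟩, ?_⟩
  rintro s ⟨⟨hs0, hs1⟩, v, hv, hz⟩
  by_contra! hcs
  have hc1 : c < 1 := hcs.trans_le hs1
  have hzx := smul_add_smul_ne_of_mem_complFace hw hc1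
  rcases hc.1.eq_or_lt with rfl | hc0
  · refine hcs.ne' (eq_zero_of_mem_decompWeights_of_mem_complFace hxX hw
      ⟨⟨hs0, hs1⟩, v, hv, ?_⟩)
    rw [← hz]
    module
  have hs1' : s < 1 := hs1.lt_of_ne (by rintro rfl; exact hzx (by rw [hz]; module))
  have hvx : v ≠ x := by
    rintro rfl
    exact hzx (by rw [hz]; module)
  obtain ⟨μ, ⟨hμ0, hμ1⟩, w', hw', rfl⟩ := hsplit.exists_decomp hv hvx
  have hzX : c • x + (1 - c) • w ∈ X \ ({x} ∪ complFace X x) := by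
    refine ⟨hXconv hxX (complFace_subset hw) hc.1 (by linarith) (by ring), ?_⟩
    rintro (hzx' | hzc)
    · exact hzx hzx'
    · exact hc0.ne' (eq_zero_of_mem_decompWeights_of_mem_complFace hxX hzc
        ⟨hc, w, complFace_subset hw, rfl⟩)
  -- `z = (s + (1 - s) * μ) • x + (1 - (s + (1 - s) * μ)) • w'` is a second split decomposition
  have huniq := (hsplit.2 _ hzX).unique (y₁ := (c, w)) (y₂ := (s + (1 - s) * μ, w'))
    ⟨⟨hc0, hc1⟩, hw, rfl⟩ ⟨⟨by nlinarith, by nlinarith⟩, hw', by rw [hz]; module⟩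
  have := congrArg Prod.fst huniq
  dsimp only at this
  nlinarith

theorem isGreatest_of_mem_convexHull (hsplit : IsSplitSingleton X x) (hXconv : Convex ℝ X)
    (hxX : x ∈ X) {c : ℝ}
    (hzc : (z, c) ∈ convexHull ℝ (insert ((x, 1) : E × ℝ) (complFace X x ×ˢ {0}))) :
    IsGreatest (decompWeights X x z) c := by
  rcases (complFace X x).eq_empty_or_nonempty with hempty | hne
  · rw [hempty, empty_prod, insert_empty_eq, convexHull_singleton, mem_singleton_iff,
      Prod.mk.injEq] at hzc
    obtain ⟨rfl, rfl⟩ := hzc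
    exact isGreatest_decompWeights_self hxX
  · rw [convexHull_insert (hne.prod (singleton_nonempty 0)),
      (hsplit.1.prod (convex_singleton 0)).convexHull_eq, mem_convexJoin_prod_zero] at hzc
    obtain ⟨hc, w, hw, rfl⟩ := hzc
    exact hsplit.isGreatest_decompWeights hXconv hxX hc hw

theorem exists_mem_convexHull (hsplit : IsSplitSingleton X x) (hz : z ∈ X) :
    ∃ c, (z, c) ∈ convexHull ℝ (insert ((x, 1) : E × ℝ) (complFace X x ×ˢ {0})) := by
  by_cases hzx : z = x
  · exact ⟨1, subset_convexHull ℝ _ (by simp [hzx])⟩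
  obtain ⟨μ, hμ, w, hw, rfl⟩ := hsplit.exists_decomp hz hzx
  refine ⟨μ, ?_⟩
  have hwG : ((w, 0) : E × ℝ) ∈ insert ((x, 1) : E × ℝ) (complFace X x ×ˢ {0}) :=
    mem_insert_of_mem _ (mk_mem_prod hw (mem_singleton 0))
  convert (convex_convexHull ℝ _) (subset_convexHull ℝ _ (mem_insert _ _))
    (subset_convexHull ℝ _ hwG) hμ.1 (sub_nonneg.2 hμ.2.le) (by ring) using 1
  ext <;> simp

end IsSplitSingleton

end SplitFace

/-- for an extreme point `x` of `X` such that `{x}` is a split face,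
the upper envelope `h_x` of the characteristic function of `{x}` (infimum of
continuous affine functions strictly above it) is upper semicontinuous on `X`,
affine on `X`, takes the value `1` at `x` and vanishes on the complementary face. -/
theorem stmt15 {E : Type*} [AddCommGroup E] [Module ℝ E] [TopologicalSpace E]
    [IsTopologicalAddGroup E] [ContinuousSMul ℝ E] [T2Space E] [LocallyConvexSpace ℝ E]
    (X : Set E) (hXc : IsCompact X) (hXconv : Convex ℝ X)
    (x : E) (hx : x ∈ X.extremePoints ℝ)
    (compl : Set E)
    (hcompl : compl = ⋃₀ {F : Set E | IsExtreme ℝ X F ∧ x ∉ F})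
    (hsplit : Convex ℝ compl ∧ ∀ z ∈ X \ ({x} ∪ compl),
      ∃! p : ℝ × E, p.1 ∈ Set.Ioo (0 : ℝ) 1 ∧ p.2 ∈ compl ∧
        z = p.1 • x + (1 - p.1) • p.2)
    (hX : E → ℝ)
    (hhX : ∀ z, hX z = sInf {r : ℝ | ∃ h : E →ᵃ[ℝ] ℝ, ContinuousOn h X ∧
      (∀ w ∈ X, (if w = x then (1 : ℝ) else 0) < h w) ∧ r = h z}) :
    UpperSemicontinuousOn hX X ∧
      (∀ p ∈ X, ∀ q ∈ X, ∀ t : ℝ, 0 ≤ t → t ≤ 1 →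
        hX (t • p + (1 - t) • q) = t * hX p + (1 - t) * hX q) ∧
      hX x = 1 ∧ (∀ z ∈ compl, hX z = 0) := by
  subst hcompl
  replace hsplit : IsSplitSingleton X x := hsplit
  obtain rfl : hX = upperEnvelope X x := funext fun z => by
    simp only [hhX, upperEnvelope, IsStrictAffineMajorant, and_assoc]
  have hgraph : ∀ z c, (z, c) ∈ convexHull ℝ (insert ((x, 1) : E × ℝ) (complFace X x ×ˢ {0})) →
      upperEnvelope X x z = c := fun z c hzc =>
    upperEnvelope_eq_of_isGreatest hXc hXconv hx.1
      (hsplit.isGreatest_of_mem_convexHull hXconv hx.1 hzc)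
  refine ⟨upperSemicontinuousOn_upperEnvelope, fun p hp q hq t ht0 ht1 => ?_,
    hgraph _ _ (subset_convexHull ℝ _ (mem_insert _ _)),
    fun z hz => hgraph _ _
      (subset_convexHull ℝ _ (mem_insert_of_mem _ (mk_mem_prod hz (mem_singleton 0))))⟩
  obtain ⟨a, hpa⟩ := hsplit.exists_mem_convexHull hp
  obtain ⟨b, hqb⟩ := hsplit.exists_mem_convexHull hq
  rw [hgraph _ _ hpa, hgraph _ _ hqb]
  apply hgraph
  have := (convex_convexHull ℝ _) hpa hqb ht0 (sub_nonneg.2 ht1) (by ring)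
  rwa [Prod.smul_mk, Prod.smul_mk, Prod.mk_add_mk] at this
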